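/- arXiv:1811.00816 — 3 statements merged into one kernel-verified Lean document; each statement's English description precedes it below -/
import Mathlib

section
/- Let M be a noncrossing perfect matching on the points {1, …, 2m}. For every p with 1 ≤ p < 2m, the nesting-values of the edge of M incident to p and of the edge of M incident to p+1 differ by at most one, i.e., |nv(p) − nv(p+1)| ≤ 1. -/
/-- The smaller endpoint of the matching edge through `p`, for a matching given by the
involution `μ`. -/
def matchLo (μ : ℕ → ℕ) (p : ℕ) : ℕ := min p (μ p)

/-- The larger endpoint of the matching edge through `p`. -/
def matchHi (μ : ℕ → ℕ) (p : ℕ) : ℕ := max p (μ p)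

/-- `μ` encodes a perfect matching on the points `{1, …, 2m}`: it is a fixed-point-free
involution of `{1, …, 2m}`.  The edges of the matching are the pairs `{p, μ p}`. -/
def IsPerfectMatchingOn (m : ℕ) (μ : ℕ → ℕ) : Prop :=
  ∀ p ∈ Set.Icc 1 (2 * m), μ p ∈ Set.Icc 1 (2 * m) ∧ μ (μ p) = p ∧ μ p ≠ p

/-- The matching `μ` on `{1, …, 2m}` is noncrossing: there are no edges `{a,b}`, `{c,d}`
with `a < c < b < d`. -/
def IsNoncrossingOn (m : ℕ) (μ : ℕ → ℕ) : Prop :=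
  ∀ p ∈ Set.Icc 1 (2 * m), ∀ q ∈ Set.Icc 1 (2 * m),
    ¬ (matchLo μ p < matchLo μ q ∧ matchLo μ q < matchHi μ p ∧ matchHi μ p < matchHi μ q)

/-- The matching edge through `q` nests the matching edge through `p`. -/
def MatchNests (μ : ℕ → ℕ) (q p : ℕ) : Prop :=
  matchLo μ q < matchLo μ p ∧ matchHi μ p < matchHi μ q

/-- `nv` is the nesting-value function of the matching `μ` on `{1, …, 2m}` (read at the
points: `nv p` is the nesting-value of the edge through `p`): the nesting-value is `0` if
no edge of the matching nests the given edge, and otherwise it is one plus the maximum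
nesting-value among the edges nesting it. -/
def IsNestingValue (m : ℕ) (μ : ℕ → ℕ) (nv : ℕ → ℕ) : Prop :=
  ∀ p ∈ Set.Icc 1 (2 * m),
    ((¬ ∃ q ∈ Set.Icc 1 (2 * m), MatchNests μ q p) → nv p = 0) ∧
    ((∃ q ∈ Set.Icc 1 (2 * m), MatchNests μ q p) →
      ∃ q ∈ Set.Icc 1 (2 * m), MatchNests μ q p ∧ nv p = nv q + 1 ∧
        ∀ q' ∈ Set.Icc 1 (2 * m), MatchNests μ q' p → nv q' ≤ nv q)

/-!
In a noncrossing matching the arcs nesting a given arc are exactly the arcs passing strictly over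
either of its endpoints, and they form a chain. Hence the nesting-value of the arc through `p` is
the number of arcs passing strictly over the point `p`. Moving from `p` to `p + 1` this set loses
at most the arc ending at `p + 1` and gains at most the arc starting at `p`.
-/

/-- The arcs passing strictly over the point `p`, each recorded by its left endpoint. -/
def arcsOver (m : ℕ) (μ : ℕ → ℕ) (p : ℕ) : Finset ℕ :=
  {g ∈ Finset.Icc 1 (2 * m) | g < p ∧ p < μ g}

section Matching

variable {m : ℕ} {μ : ℕ → ℕ}

lemma mem_arcsOver {p g : ℕ} :
    g ∈ arcsOver m μ p ↔ g ∈ Set.Icc 1 (2 * m) ∧ g < p ∧ p < μ g := by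
  simp [arcsOver]

lemma matchLo_of_lt {g : ℕ} (h : g < μ g) : matchLo μ g = g := min_eq_left h.le

lemma matchHi_of_lt {g : ℕ} (h : g < μ g) : matchHi μ g = μ g := max_eq_right h.le

lemma self_notMem_arcsOver (p : ℕ) : p ∉ arcsOver m μ p :=
  fun h => lt_irrefl p (mem_arcsOver.1 h).2.1

lemma arcsOver_succ_subset (p : ℕ) : arcsOver m μ (p + 1) ⊆ insert p (arcsOver m μ p) := by
  intro g hg
  obtain ⟨hg, hgp, hpg⟩ := mem_arcsOver.1 hg
  rcases Nat.lt_succ_iff_lt_or_eq.1 hgp with hlt | rfl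
  · exact Finset.mem_insert_of_mem (mem_arcsOver.2 ⟨hg, hlt, by omega⟩)
  · exact Finset.mem_insert_self _ _

lemma mem_arcsOver_of_lt {p g g' : ℕ} (hg : g ∈ arcsOver m μ p) (hg' : g' ∈ arcsOver m μ p)
    (hlt : g < g') : g ∈ arcsOver m μ g' := by
  obtain ⟨hgI, -, hpg⟩ := mem_arcsOver.1 hg
  obtain ⟨-, hg'p, -⟩ := mem_arcsOver.1 hg'
  exact mem_arcsOver.2 ⟨hgI, hlt, by omega⟩

variable (hμ : IsPerfectMatchingOn m μ)
include hμ

lemma arcsOver_subset_succ (p : ℕ) :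
    arcsOver m μ p ⊆ insert (μ (p + 1)) (arcsOver m μ (p + 1)) := by
  intro g hg
  obtain ⟨hg, hgp, hpg⟩ := mem_arcsOver.1 hg
  rcases Nat.lt_or_ge (p + 1) (μ g) with hlt | hle
  · exact Finset.mem_insert_of_mem (mem_arcsOver.2 ⟨hg, by omega, hlt⟩)
  · have hμg : μ g = p + 1 := by omega
    exact Finset.mem_insert.2 (Or.inl (by rw [← hμg, (hμ g hg).2.1]))

lemma matchLo_mem {p : ℕ} (hp : p ∈ Set.Icc 1 (2 * m)) : matchLo μ p ∈ Set.Icc 1 (2 * m) := by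
  rcases min_choice p (μ p) with h | h <;> rw [matchLo, h]
  exacts [hp, (hμ p hp).1]

lemma matchLo_lt_matchHi {p : ℕ} (hp : p ∈ Set.Icc 1 (2 * m)) : matchLo μ p < matchHi μ p := by
  have := (hμ p hp).2.2
  simp only [matchLo, matchHi]
  omega

lemma apply_matchLo {p : ℕ} (hp : p ∈ Set.Icc 1 (2 * m)) : μ (matchLo μ p) = matchHi μ p := by
  rcases le_total p (μ p) with h | h
  · rw [matchLo, matchHi, min_eq_left h, max_eq_right h]
  · rw [matchLo, matchHi, min_eq_right h, max_eq_left h, (hμ p hp).2.1]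

lemma mem_arcsOver_iff (hnc : IsNoncrossingOn m μ) {p g : ℕ} (hp : p ∈ Set.Icc 1 (2 * m)) :
    g ∈ arcsOver m μ p ↔
      g ∈ Set.Icc 1 (2 * m) ∧ g < matchLo μ p ∧ matchHi μ p < μ g := by
  refine ⟨fun h => ?_, fun ⟨hg, hlo, hhi⟩ => ?_⟩
  · obtain ⟨hg, hgp, hpg⟩ := mem_arcsOver.1 h
    obtain ⟨-, hμμg, -⟩ := hμ g hg
    obtain ⟨-, hμμp, hμp⟩ := hμ p hp
    have hinj : μ p = μ g → p = g := fun h => by rw [← hμμp, h, hμμg]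
    have hpart : g = μ p → μ g = p := fun h => by rw [h, hμμp]
    have h₁ := hnc g hg p hp
    have h₂ := hnc p hp g hg
    rw [matchLo_of_lt (hgp.trans hpg), matchHi_of_lt (hgp.trans hpg)] at h₁ h₂
    refine ⟨hg, ?_⟩
    rcases le_total p (μ p) with h | h
    · rw [matchLo, matchHi, min_eq_left h, max_eq_right h] at h₁ h₂ ⊢
      omega
    · rw [matchLo, matchHi, min_eq_right h, max_eq_left h] at h₁ h₂ ⊢
      omega
  · exact mem_arcsOver.2
      ⟨hg, lt_of_lt_of_le hlo (min_le_left _ _), lt_of_le_of_lt (le_max_left _ _) hhi⟩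

lemma arcsOver_matchLo (hnc : IsNoncrossingOn m μ) {p : ℕ} (hp : p ∈ Set.Icc 1 (2 * m)) :
    arcsOver m μ (matchLo μ p) = arcsOver m μ p := by
  have hlo := matchLo_mem hμ hp
  have hlt : matchLo μ p < μ (matchLo μ p) := by
    rw [apply_matchLo hμ hp]; exact matchLo_lt_matchHi hμ hp
  ext g
  rw [mem_arcsOver_iff hμ hnc hlo, mem_arcsOver_iff hμ hnc hp, matchLo_of_lt hlt,
    matchHi_of_lt hlt, apply_matchLo hμ hp]

lemma matchNests_of_mem_arcsOver (hnc : IsNoncrossingOn m μ) {p g : ℕ}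
    (hp : p ∈ Set.Icc 1 (2 * m)) (hg : g ∈ arcsOver m μ p) : MatchNests μ g p := by
  obtain ⟨-, hlo, hhi⟩ := (mem_arcsOver_iff hμ hnc hp).1 hg
  have hlt : g < μ g := by have := matchLo_lt_matchHi hμ hp; omega
  rw [MatchNests, matchLo_of_lt hlt, matchHi_of_lt hlt]
  exact ⟨hlo, hhi⟩

lemma matchLo_mem_arcsOver_of_matchNests (hnc : IsNoncrossingOn m μ) {p q : ℕ}
    (hp : p ∈ Set.Icc 1 (2 * m)) (hq : q ∈ Set.Icc 1 (2 * m)) (hqp : MatchNests μ q p) :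
    matchLo μ q ∈ arcsOver m μ p := by
  rw [mem_arcsOver_iff hμ hnc hp, apply_matchLo hμ hq]
  exact ⟨matchLo_mem hμ hq, hqp⟩

lemma arcsOver_ssubset_of_mem (hnc : IsNoncrossingOn m μ) {p g : ℕ}
    (hg : g ∈ arcsOver m μ p) : arcsOver m μ g ⊂ arcsOver m μ p := by
  obtain ⟨hgI, hgp, hpg⟩ := mem_arcsOver.1 hg
  refine Finset.ssubset_iff_subset_ne.2 ⟨fun h hh => ?_, fun he => ?_⟩
  · obtain ⟨hI, hhg, hgh⟩ := (mem_arcsOver_iff hμ hnc hgI).1 hh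
    have : matchLo μ g ≤ g := min_le_left _ _
    have : μ g ≤ matchHi μ g := le_max_right _ _
    exact mem_arcsOver.2 ⟨hI, by omega, by omega⟩
  · exact self_notMem_arcsOver g (he ▸ hg)

lemma nv_eq_card_arcsOver (hnc : IsNoncrossingOn m μ) {nv : ℕ → ℕ}
    (hnv : IsNestingValue m μ nv) {p : ℕ} (hp : p ∈ Set.Icc 1 (2 * m)) :
    nv p = (arcsOver m μ p).card := by
  induction hn : (arcsOver m μ p).card using Nat.strong_induction_on generalizing p with
  | _ n ih =>
  have ih' : ∀ g ∈ Set.Icc 1 (2 * m), arcsOver m μ g ⊂ arcsOver m μ p →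
      nv g = (arcsOver m μ g).card :=
    fun g hg hsub => ih _ (hn ▸ Finset.card_lt_card hsub) hg rfl
  by_cases hex : ∃ q ∈ Set.Icc 1 (2 * m), MatchNests μ q p
  swap
  · rw [← hn, (hnv p hp).1 hex, eq_comm, Finset.card_eq_zero,
      Finset.eq_empty_iff_forall_notMem]
    exact fun g hg => hex ⟨g, (mem_arcsOver.1 hg).1, matchNests_of_mem_arcsOver hμ hnc hp hg⟩
  obtain ⟨q, hq, hqp, hnvp, hmax⟩ := (hnv p hp).2 hex
  set g₀ := matchLo μ q
  have hg₀ : g₀ ∈ arcsOver m μ p := matchLo_mem_arcsOver_of_matchNests hμ hnc hp hq hqp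
  have hq_eq : arcsOver m μ q = arcsOver m μ g₀ := (arcsOver_matchLo hμ hnc hq).symm
  have hsub₀ := arcsOver_ssubset_of_mem hμ hnc hg₀
  have hnvq : nv q = (arcsOver m μ g₀).card := hq_eq ▸ ih' q hq (hq_eq ▸ hsub₀)
  have heq : arcsOver m μ p = insert g₀ (arcsOver m μ g₀) := by
    refine Finset.Subset.antisymm (fun g hg => ?_)
      (Finset.insert_subset hg₀ hsub₀.subset)
    have hgI := (mem_arcsOver.1 hg).1
    rcases lt_trichotomy g g₀ with hlt | rfl | hgt
    · exact Finset.mem_insert_of_mem (mem_arcsOver_of_lt hg hg₀ hlt)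
    · exact Finset.mem_insert_self _ _
    -- an arc strictly inside the arc `g₀` would have a larger nesting-value than `q`
    · have hdeeper : arcsOver m μ g₀ ⊂ arcsOver m μ g :=
        arcsOver_ssubset_of_mem hμ hnc (mem_arcsOver_of_lt hg₀ hg hgt)
      have hle := hmax g hgI (matchNests_of_mem_arcsOver hμ hnc hp hg)
      rw [ih' g hgI (arcsOver_ssubset_of_mem hμ hnc hg), hnvq] at hle
      exact absurd (Finset.card_lt_card hdeeper) (not_lt.2 hle)
  rw [← hn, hnvp, hnvq, heq, Finset.card_insert_of_notMem (self_notMem_arcsOver g₀)]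

end Matching

theorem nestingValue_consecutive_points_general (m : ℕ) (μ nv : ℕ → ℕ)
    (hμ : IsPerfectMatchingOn m μ) (hnc : IsNoncrossingOn m μ)
    (hnv : IsNestingValue m μ nv) :
    ∀ p : ℕ, 1 ≤ p → p + 1 ≤ 2 * m →
      nv p ≤ nv (p + 1) + 1 ∧ nv (p + 1) ≤ nv p + 1 := by
  intro p hp₁ hp₂
  rw [nv_eq_card_arcsOver hμ hnc hnv ⟨hp₁, by omega⟩,
    nv_eq_card_arcsOver hμ hnc hnv ⟨by omega, hp₂⟩]
  exact ⟨(Finset.card_le_card (arcsOver_subset_succ hμ p)).trans (Finset.card_insert_le _ _),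
    (Finset.card_le_card (arcsOver_succ_subset p)).trans (Finset.card_insert_le _ _)⟩

/-- Let `M` be a noncrossing perfect matching on the points `{1, …, 2m}`.
For every `p` with `1 ≤ p < 2m`, the nesting-values of the edge incident to `p` and of the
edge incident to `p+1` differ by at most one: `|nv(p) − nv(p+1)| ≤ 1`. -/
theorem nestingValue_consecutive_points (m : ℕ) (hm : 1 ≤ m) (μ nv : ℕ → ℕ)
    (hμ : IsPerfectMatchingOn m μ) (hnc : IsNoncrossingOn m μ)
    (hnv : IsNestingValue m μ nv) :
    ∀ p : ℕ, 1 ≤ p → p + 1 ≤ 2 * m →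
      nv p ≤ nv (p + 1) + 1 ∧ nv (p + 1) ≤ nv p + 1 :=
  nestingValue_consecutive_points_general m μ nv hμ hnc hnv
end

section
/- Let M be a noncrossing perfect matching on the points {1, …, 2m}. For all i ≤ j in {1, …, 2m}, the set { nv(p) : i ≤ p ≤ j } of nesting-values of the edges incident to the points of the interval [i, j] is a set of consecutive integers; in particular, for every integer t with min_{i ≤ p ≤ j} nv(p) ≤ t ≤ max_{i ≤ p ≤ j} nv(p) there exists a point p with i ≤ p ≤ j and nv(p) = t. -/
/-!
In a noncrossing matching an edge nests the edge through `p` exactly when it strictly encloses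
the point `p`. Hence, by induction on the number of enclosing edges, `nv p` is that number: the
innermost enclosing edge is enclosed by all the others, so its value is one less. Moving from
`p` to `p + 1` opens or closes at most one edge, so this count changes by at most one per step,
and a discrete intermediate value argument gives every value in between.
-/

/-- The matching edges strictly enclosing the point `p`, each recorded by its left endpoint. -/
def enclosing (m : ℕ) (μ : ℕ → ℕ) (p : ℕ) : Finset ℕ :=
  (Finset.Icc 1 (2 * m)).filter fun q => q < p ∧ p < μ q

theorem mem_enclosing {m : ℕ} {μ : ℕ → ℕ} {p q : ℕ} :
    q ∈ enclosing m μ p ↔ q ∈ Set.Icc 1 (2 * m) ∧ q < p ∧ p < μ q := by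
  simp [enclosing]

theorem Nat.exists_eq_of_step_le_one {g : ℕ → ℕ} {a b t : ℕ} (hab : a ≤ b)
    (hstep : ∀ k ∈ Set.Ico a b, g (k + 1) ≤ g k + 1 ∧ g k ≤ g (k + 1) + 1)
    (ht : t ∈ Set.uIcc (g a) (g b)) : ∃ p ∈ Set.Icc a b, g p = t := by
  induction b, hab using Nat.le_induction with
  | base => exact ⟨a, Set.left_mem_Icc.2 le_rfl, by simpa [eq_comm] using ht⟩
  | succ b hab ih =>
    by_cases hmid : t ∈ Set.uIcc (g a) (g b)
    · obtain ⟨p, hp, hpt⟩ :=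
        ih (fun k hk => hstep k ⟨hk.1, hk.2.trans (Nat.lt_succ_self b)⟩) hmid
      exact ⟨p, ⟨hp.1, hp.2.trans (Nat.le_succ b)⟩, hpt⟩
    · have := hstep b ⟨hab, Nat.lt_succ_self b⟩
      simp only [Set.mem_uIcc] at ht hmid
      exact ⟨b + 1, ⟨hab.trans (Nat.le_succ b), le_rfl⟩, by omega⟩

section Matching

variable {m : ℕ} {μ : ℕ → ℕ}

theorem matchNests_iff_of_lt (hμ : IsPerfectMatchingOn m μ) (hnc : IsNoncrossingOn m μ)
    {p q : ℕ} (hp : p ∈ Set.Icc 1 (2 * m)) (hq : q ∈ Set.Icc 1 (2 * m)) (hqμ : q < μ q) :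
    MatchNests μ q p ↔ q < p ∧ p < μ q := by
  obtain ⟨-, hpμμ, hpμ⟩ := hμ p hp
  obtain ⟨-, hqμμ, -⟩ := hμ q hq
  have hsame_edge : μ p = q → μ q = p := fun h => h ▸ hpμμ
  have hμ_inj : μ p = μ q → p = q := fun h => by rw [← hpμμ, h, hqμμ]
  -- an edge around the point `p` that does not nest the edge through `p` crosses it
  have hpq := hnc p hp q hq
  have hqp := hnc q hq p hp
  simp only [MatchNests, matchLo, matchHi] at hpq hqp ⊢
  omega

theorem matchLo_mem_enclosing (hμ : IsPerfectMatchingOn m μ) {p q : ℕ}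
    (hq : q ∈ Set.Icc 1 (2 * m)) (hqp : MatchNests μ q p) :
    matchLo μ q ∈ enclosing m μ p := by
  obtain ⟨hμq, hqμμ, -⟩ := hμ q hq
  have hlo : matchLo μ q ∈ Set.Icc 1 (2 * m) ∧ μ (matchLo μ q) = matchHi μ q := by
    rcases le_total q (μ q) with h | h <;> simp [matchLo, matchHi, h, hq, hμq, hqμμ]
  rw [mem_enclosing, hlo.2]
  simp only [MatchNests, matchLo, matchHi] at hqp ⊢
  exact ⟨hlo.1, by omega, by omega⟩

theorem matchLo_notMem_enclosing (hμ : IsPerfectMatchingOn m μ) {q : ℕ}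
    (hq : q ∈ Set.Icc 1 (2 * m)) : matchLo μ q ∉ enclosing m μ q := by
  obtain ⟨-, hqμμ, -⟩ := hμ q hq
  rw [mem_enclosing]
  rcases le_total q (μ q) with h | h <;> simp [matchLo, h, hqμμ]

theorem enclosing_subset_of_matchNests (hμ : IsPerfectMatchingOn m μ)
    (hnc : IsNoncrossingOn m μ) {p q : ℕ} (hp : p ∈ Set.Icc 1 (2 * m))
    (hq : q ∈ Set.Icc 1 (2 * m)) (hqp : MatchNests μ q p) :
    enclosing m μ q ⊆ enclosing m μ p := by
  intro r hr
  obtain ⟨hr, hrq, hqr⟩ := mem_enclosing.1 hr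
  have hrp := (matchNests_iff_of_lt hμ hnc hp hr (hrq.trans hqr)).2
  have hrq := (matchNests_iff_of_lt hμ hnc hq hr (hrq.trans hqr)).2 ⟨hrq, hqr⟩
  simp only [MatchNests, matchLo, matchHi] at hqp hrq hrp
  exact mem_enclosing.2 ⟨hr, by omega, by omega⟩

theorem card_enclosing_lt_of_matchNests (hμ : IsPerfectMatchingOn m μ)
    (hnc : IsNoncrossingOn m μ) {p q : ℕ} (hp : p ∈ Set.Icc 1 (2 * m))
    (hq : q ∈ Set.Icc 1 (2 * m)) (hqp : MatchNests μ q p) :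
    (enclosing m μ q).card < (enclosing m μ p).card :=
  Finset.card_lt_card <| (Finset.ssubset_iff_of_subset
    (enclosing_subset_of_matchNests hμ hnc hp hq hqp)).2
    ⟨_, matchLo_mem_enclosing hμ hq hqp, matchLo_notMem_enclosing hμ hq⟩

/-- The edge with the largest left endpoint is the innermost edge enclosing `p`. -/
theorem erase_max'_subset_enclosing {p : ℕ} (h : (enclosing m μ p).Nonempty) :
    (enclosing m μ p).erase ((enclosing m μ p).max' h) ⊆
      enclosing m μ ((enclosing m μ p).max' h) := by
  intro r hr
  have hmax := mem_enclosing.1 ((enclosing m μ p).max'_mem h)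
  obtain ⟨hrne, hrmem⟩ := Finset.mem_erase.1 hr
  obtain ⟨hr, -, hpr⟩ := mem_enclosing.1 hrmem
  exact mem_enclosing.2 ⟨hr, lt_of_le_of_ne ((enclosing m μ p).le_max' r hrmem) hrne,
    hmax.2.1.trans hpr⟩

theorem nestingValue_eq_card_enclosing (hμ : IsPerfectMatchingOn m μ)
    (hnc : IsNoncrossingOn m μ) {nv : ℕ → ℕ} (hnv : IsNestingValue m μ nv) {p : ℕ}
    (hp : p ∈ Set.Icc 1 (2 * m)) : nv p = (enclosing m μ p).card := by
  induction hn : (enclosing m μ p).card using Nat.strong_induction_on generalizing p with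
  | _ n ih =>
    have hnest : ∀ q ∈ Set.Icc 1 (2 * m), MatchNests μ q p →
        nv q = (enclosing m μ q).card ∧ (enclosing m μ q).card < n := fun q hq hqp =>
      have hlt := hn ▸ card_enclosing_lt_of_matchNests hμ hnc hp hq hqp
      ⟨ih _ hlt hq rfl, hlt⟩
    rcases (enclosing m μ p).eq_empty_or_nonempty with hempty | hne
    · refine hn ▸ hempty ▸ (hnv p hp).1 fun ⟨q, hq, hqp⟩ => ?_
      simpa [hempty] using matchLo_mem_enclosing hμ hq hqp
    · set k := (enclosing m μ p).max' hne with hk_def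
      obtain ⟨hk, hk_lt, hlt_μk⟩ := mem_enclosing.1 ((enclosing m μ p).max'_mem hne)
      have hkp : MatchNests μ k p :=
        (matchNests_iff_of_lt hμ hnc hp hk (hk_lt.trans hlt_μk)).2 ⟨hk_lt, hlt_μk⟩
      have hk_card : n ≤ (enclosing m μ k).card + 1 := by
        have := Finset.card_le_card (erase_max'_subset_enclosing hne)
        rw [Finset.card_erase_of_mem ((enclosing m μ p).max'_mem hne), hn, ← hk_def] at this
        omega
      obtain ⟨q, hq, hqp, hpq, hqmax⟩ := (hnv p hp).2 ⟨k, hk, hkp⟩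
      have hkq := hqmax k hk hkp
      have hk_nv := hnest k hk hkp
      have hq_nv := hnest q hq hqp
      omega

theorem card_enclosing_succ_le (p : ℕ) :
    (enclosing m μ (p + 1)).card ≤ (enclosing m μ p).card + 1 := by
  refine (Finset.card_le_card fun q hq => ?_).trans (Finset.card_insert_le p _)
  obtain ⟨hq, hqp, hpq⟩ := mem_enclosing.1 hq
  rcases Nat.lt_succ_iff_lt_or_eq.1 hqp with hqp | rfl
  · exact Finset.mem_insert_of_mem (mem_enclosing.2 ⟨hq, hqp, by omega⟩)
  · exact Finset.mem_insert_self _ _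

theorem card_enclosing_le_succ (hμ : IsPerfectMatchingOn m μ) (p : ℕ) :
    (enclosing m μ p).card ≤ (enclosing m μ (p + 1)).card + 1 := by
  refine (Finset.card_le_card fun q hq => ?_).trans (Finset.card_insert_le (μ (p + 1)) _)
  obtain ⟨hq, hqp, hpq⟩ := mem_enclosing.1 hq
  rcases (show p + 1 ≤ μ q from hpq).eq_or_lt with hμq | hpq
  · exact Finset.mem_insert.2 (Or.inl (by rw [hμq, (hμ q hq).2.1]))
  · exact Finset.mem_insert_of_mem (mem_enclosing.2 ⟨hq, by omega, hpq⟩)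

end Matching

theorem nestingValue_interval_consecutive_general (m : ℕ) (μ nv : ℕ → ℕ)
    (hμ : IsPerfectMatchingOn m μ) (hnc : IsNoncrossingOn m μ)
    (hnv : IsNestingValue m μ nv) :
    ∀ i j : ℕ, 1 ≤ i → i ≤ j → j ≤ 2 * m →
      ∀ t : ℕ,
        (∃ p : ℕ, i ≤ p ∧ p ≤ j ∧ nv p ≤ t) →
        (∃ p : ℕ, i ≤ p ∧ p ≤ j ∧ t ≤ nv p) →
        ∃ p : ℕ, i ≤ p ∧ p ≤ j ∧ nv p = t := by
  rintro i j hi - hj t ⟨p₁, hp₁i, hp₁j, hp₁t⟩ ⟨p₂, hp₂i, hp₂j, hp₂t⟩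
  have hstep : ∀ k ∈ Set.Ico (min p₁ p₂) (max p₁ p₂),
      nv (k + 1) ≤ nv k + 1 ∧ nv k ≤ nv (k + 1) + 1 := by
    rintro k ⟨hk₁, hk₂⟩
    have hk : k ∈ Set.Icc 1 (2 * m) := ⟨by omega, by omega⟩
    have hk' : k + 1 ∈ Set.Icc 1 (2 * m) := ⟨by omega, by omega⟩
    rw [nestingValue_eq_card_enclosing hμ hnc hnv hk,
      nestingValue_eq_card_enclosing hμ hnc hnv hk']
    exact ⟨card_enclosing_succ_le k, card_enclosing_le_succ hμ k⟩
  have ht : t ∈ Set.uIcc (nv (min p₁ p₂)) (nv (max p₁ p₂)) := by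
    rcases le_total p₁ p₂ with h | h <;> simp [h, Set.mem_uIcc] <;> omega
  obtain ⟨p, ⟨hp₁, hp₂⟩, hpt⟩ := Nat.exists_eq_of_step_le_one min_le_max hstep ht
  exact ⟨p, by omega, by omega, hpt⟩

/-- Let `M` be a noncrossing perfect matching on the points `{1, …, 2m}`.
For all `i ≤ j` in `{1, …, 2m}`, the set `{nv(p) : i ≤ p ≤ j}` of nesting-values of the
edges incident to the points of `[i, j]` is a set of consecutive integers; in particular,
for every `t` between the minimum and the maximum of the values `nv(p)` (`i ≤ p ≤ j`)
there exists a point `p` with `i ≤ p ≤ j` and `nv(p) = t`. -/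
theorem nestingValue_interval_consecutive (m : ℕ) (hm : 1 ≤ m) (μ nv : ℕ → ℕ)
    (hμ : IsPerfectMatchingOn m μ) (hnc : IsNoncrossingOn m μ)
    (hnv : IsNestingValue m μ nv) :
    ∀ i j : ℕ, 1 ≤ i → i ≤ j → j ≤ 2 * m →
      ∀ t : ℕ,
        (∃ p : ℕ, i ≤ p ∧ p ≤ j ∧ nv p ≤ t) →
        (∃ p : ℕ, i ≤ p ∧ p ≤ j ∧ t ≤ nv p) →
        ∃ p : ℕ, i ≤ p ∧ p ≤ j ∧ nv p = t :=
  nestingValue_interval_consecutive_general m μ nv hμ hnc hnv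
end

section
/- Let M be a noncrossing perfect matching on the points {1, …, 2m}, and let ≺ be the linear order on {1, …, 2m} defined by: p ≺ q if and only if nv(p) < nv(q), or nv(p) = nv(q) and p < q. Then the two endpoints of every edge of M are consecutive in ≺; consequently, the m edges of M form an m-necklace in ≺ (no two edges of M nest with respect to ≺). -/
/-- The linear order `≺` on the points `{1, …, 2m}` determined by the nesting-values:
`p ≺ q` iff `nv p < nv q`, or `nv p = nv q` and `p < q`. -/
def nvPrec (nv : ℕ → ℕ) (p q : ℕ) : Prop :=
  nv p < nv q ∨ (nv p = nv q ∧ p < q)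

/-!
Both endpoints of an edge carry the same nesting-value, so a point `q` strictly `≺`-between
`p` and `μ p` has `nv q = nv p` and `p < q < μ p`. By noncrossingness the partner of `q` also
lies between `p` and `μ p`, so the edge through `p` nests the edge through `q`, forcing
`nv p < nv q`.
-/

section

variable {m : ℕ} {μ nv : ℕ → ℕ}

theorem nvPrec_trans {p q r : ℕ} (hpq : nvPrec nv p q) (hqr : nvPrec nv q r) :
    nvPrec nv p r := by
  unfold nvPrec at *
  omega

theorem IsNestingValue.nv_lt_of_matchNests (hnv : IsNestingValue m μ nv) {r q : ℕ}
    (hr : r ∈ Set.Icc 1 (2 * m)) (hq : q ∈ Set.Icc 1 (2 * m)) (h : MatchNests μ r q) :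
    nv r < nv q := by
  obtain ⟨q', -, -, hq'_eq, hq'_max⟩ := (hnv q hq).2 ⟨r, hr, h⟩
  have := hq'_max r hr h
  omega

theorem IsNestingValue.nv_partner_eq (hμ : IsPerfectMatchingOn m μ)
    (hnv : IsNestingValue m μ nv) {p : ℕ} (hp : p ∈ Set.Icc 1 (2 * m)) :
    nv (μ p) = nv p := by
  obtain ⟨hμp, hμμp, -⟩ := hμ p hp
  have hiff : ∀ r, MatchNests μ r (μ p) ↔ MatchNests μ r p := by
    intro r
    simp only [MatchNests, matchLo, matchHi, hμμp]
    omega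
  by_cases h : ∃ q ∈ Set.Icc 1 (2 * m), MatchNests μ q p
  · obtain ⟨q₁, hq₁, hn₁, he₁, hmax₁⟩ := (hnv p hp).2 h
    obtain ⟨q₂, hq₂, hn₂, he₂, hmax₂⟩ := (hnv (μ p) hμp).2
      (by obtain ⟨q, hq, hn⟩ := h; exact ⟨q, hq, (hiff q).2 hn⟩)
    have h₁ := hmax₁ q₂ hq₂ ((hiff q₂).1 hn₂)
    have h₂ := hmax₂ q₁ hq₁ ((hiff q₁).2 hn₁)
    omega
  · rw [(hnv p hp).1 h, (hnv (μ p) hμp).1 (fun ⟨q, hq, hn⟩ => h ⟨q, hq, (hiff q).1 hn⟩)]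

theorem IsNoncrossingOn.matchNests_of_mem_Ioo (hμ : IsPerfectMatchingOn m μ)
    (hnc : IsNoncrossingOn m μ) {p q : ℕ} (hp : p ∈ Set.Icc 1 (2 * m))
    (hq : q ∈ Set.Icc 1 (2 * m)) (hpq : q ∈ Set.Ioo p (μ p)) : MatchNests μ p q := by
  obtain ⟨hpq₁, hpq₂⟩ := hpq
  obtain ⟨-, hμμp, -⟩ := hμ p hp
  obtain ⟨-, hμμq, -⟩ := hμ q hq
  have hne₁ : μ q ≠ p := fun h => by rw [← h, hμμq] at hpq₂; omega
  have hne₂ : μ q ≠ μ p := fun h => by rw [← hμμq, h, hμμp] at hpq₁; omega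
  have hlo : p < μ q := by
    by_contra
    exact hnc q hq p hp (by simp only [matchLo, matchHi]; omega)
  have hhi : μ q < μ p := by
    by_contra
    exact hnc p hp q hq (by simp only [matchLo, matchHi]; omega)
  simp only [MatchNests, matchLo, matchHi]
  omega

theorem IsNestingValue.not_nvPrec_between (hμ : IsPerfectMatchingOn m μ)
    (hnc : IsNoncrossingOn m μ) (hnv : IsNestingValue m μ nv) {p q : ℕ}
    (hp : p ∈ Set.Icc 1 (2 * m)) (hq : q ∈ Set.Icc 1 (2 * m))
    (hpq : nvPrec nv p q) (hqp : nvPrec nv q (μ p)) : False := by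
  have hpartner := hnv.nv_partner_eq hμ hp
  have hbetween : nv q = nv p ∧ q ∈ Set.Ioo p (μ p) := by
    unfold nvPrec at hpq hqp
    simp only [Set.mem_Ioo]
    omega
  have hlt := hnv.nv_lt_of_matchNests hp hq (hnc.matchNests_of_mem_Ioo hμ hp hq hbetween.2)
  omega

end

theorem nestingValue_order_necklace_general (m : ℕ) (μ nv : ℕ → ℕ)
    (hμ : IsPerfectMatchingOn m μ) (hnc : IsNoncrossingOn m μ)
    (hnv : IsNestingValue m μ nv) :
    (∀ p ∈ Set.Icc 1 (2 * m), ∀ q ∈ Set.Icc 1 (2 * m),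
      nvPrec nv p q → nvPrec nv q (μ p) → False) ∧
    (∀ p ∈ Set.Icc 1 (2 * m), ∀ q ∈ Set.Icc 1 (2 * m),
      q ≠ p → q ≠ μ p →
      ¬ (nvPrec nv p q ∧ nvPrec nv q (μ q) ∧ nvPrec nv (μ q) (μ p))) :=
  ⟨fun _ hp _ hq => hnv.not_nvPrec_between hμ hnc hp hq,
    fun _ hp _ hq _ _ ⟨h₁, h₂, h₃⟩ =>
      hnv.not_nvPrec_between hμ hnc hp hq h₁ (nvPrec_trans h₂ h₃)⟩

/-- Let `M` be a noncrossing perfect matching on `{1, …, 2m}` and let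
`≺` be the order defined by `p ≺ q` iff `nv p < nv q`, or `nv p = nv q` and `p < q`.
Then the endpoints of every edge of `M` are consecutive in `≺` (no point lies strictly
`≺`-between `p` and `μ p`); consequently, the `m` edges of `M` form an `m`-necklace in
`≺`: no two independent edges of `M` nest with respect to `≺`. -/
theorem nestingValue_order_necklace (m : ℕ) (hm : 1 ≤ m) (μ nv : ℕ → ℕ)
    (hμ : IsPerfectMatchingOn m μ) (hnc : IsNoncrossingOn m μ)
    (hnv : IsNestingValue m μ nv) :
    (∀ p ∈ Set.Icc 1 (2 * m), ∀ q ∈ Set.Icc 1 (2 * m),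
      nvPrec nv p q → nvPrec nv q (μ p) → False) ∧
    (∀ p ∈ Set.Icc 1 (2 * m), ∀ q ∈ Set.Icc 1 (2 * m),
      q ≠ p → q ≠ μ p →
      ¬ (nvPrec nv p q ∧ nvPrec nv q (μ q) ∧ nvPrec nv (μ q) (μ p))) :=
  nestingValue_order_necklace_general m μ nv hμ hnc hnv
end
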